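/- arXiv:2010.01936 — 2 statements merged into one kernel-verified Lean document; each statement's English description precedes it below -/
import Mathlib

section
/- Let M = ran[F; G] for F, G ∈ K^{n×l}. Then M is nonnegative if and only if G*F = F*G ≥ 0 (positive semi-definite), and M is dissipative if and only if G*F + F*G ≤ 0 (negative semi-definite). -/
open Matrix
open scoped ComplexOrder

namespace PHDAE
noncomputable section

/-- A linear relation on `ℂ^n`: a subspace of `ℂ^n × ℂ^n`. -/
abbrev Rel (n : ℕ) := Submodule ℂ ((Fin n → ℂ) × (Fin n → ℂ))

/-- The standard inner product `⟨x,y⟩ = ∑ conj (x i) * y i` on `ℂ^n`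
(conjugate-linear in the first argument). -/
noncomputable def ip {n : ℕ} (x y : Fin n → ℂ) : ℂ := star x ⬝ᵥ y

/-- The adjoint relation `M* = {(x,y) | ⟪x,w⟫ = ⟪y,v⟫ for all (v,w) ∈ M}`. -/
noncomputable def adj {n : ℕ} (M : Rel n) : Rel n where
  carrier := {p | ∀ q ∈ M, ip p.1 q.2 = ip p.2 q.1}
  add_mem' := by
    intro a b ha hb q hq
    simp only [Set.mem_setOf_eq, ip, Prod.fst_add, Prod.snd_add, star_add,
      add_dotProduct] at *
    rw [ha q hq, hb q hq]
  zero_mem' := by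
    intro q hq; simp [ip]
  smul_mem' := by
    intro c a ha q hq
    simp only [Set.mem_setOf_eq, ip, Prod.smul_fst, Prod.smul_snd, star_smul,
      smul_dotProduct] at *
    rw [ha q hq]

/-- `−M = {(x, −y) | (x,y) ∈ M}`. -/
def negRel {n : ℕ} (M : Rel n) : Rel n :=
  M.map (LinearMap.prodMap LinearMap.id (-LinearMap.id))

/-- The inverse relation `M⁻¹ = {(y,x) | (x,y) ∈ M}`. -/
def invRel {n : ℕ} (M : Rel n) : Rel n :=
  M.map (LinearEquiv.prodComm ℂ (Fin n → ℂ) (Fin n → ℂ)).toLinearMap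

/-- The product (composition) `D ∘ L = {(x,z) | ∃ y, (x,y) ∈ L ∧ (y,z) ∈ D}`. -/
def comp {n : ℕ} (D L : Rel n) : Rel n where
  carrier := {p | ∃ y, (p.1, y) ∈ L ∧ (y, p.2) ∈ D}
  add_mem' := by
    rintro a b ⟨y, hy1, hy2⟩ ⟨z, hz1, hz2⟩
    exact ⟨y + z, by simpa using L.add_mem hy1 hz1, by simpa using D.add_mem hy2 hz2⟩
  zero_mem' := ⟨0, L.zero_mem, D.zero_mem⟩
  smul_mem' := by
    rintro c a ⟨y, hy1, hy2⟩
    exact ⟨c • y, by simpa using L.smul_mem c hy1, by simpa using D.smul_mem c hy2⟩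

/-- The range representation `ran [F; G] = {(Fz, Gz) | z ∈ ℂ^l}`. -/
def ranRel {n l : ℕ} (F G : Matrix (Fin n) (Fin l) ℂ) : Rel n :=
  LinearMap.range ((Matrix.mulVecLin F).prod (Matrix.mulVecLin G))

/-- The kernel representation `ker [K, L] = {(x,y) | Kx + Ly = 0}`. -/
def kerRel {n : ℕ} (K L : Matrix (Fin n) (Fin n) ℂ) : Rel n :=
  LinearMap.ker ((Matrix.mulVecLin K).coprod (Matrix.mulVecLin L))

/-- The graph `{(x, Ax) | x ∈ ℂ^n}` of a matrix. -/
def graphRel {n : ℕ} (A : Matrix (Fin n) (Fin n) ℂ) : Rel n :=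
  ranRel 1 A

def domRel {n : ℕ} (M : Rel n) : Submodule ℂ (Fin n → ℂ) :=
  M.map (LinearMap.fst ℂ _ _)

def ranSRel {n : ℕ} (M : Rel n) : Submodule ℂ (Fin n → ℂ) :=
  M.map (LinearMap.snd ℂ _ _)

def kerSRel {n : ℕ} (M : Rel n) : Submodule ℂ (Fin n → ℂ) :=
  M.comap (LinearMap.inl ℂ _ _)

def mulRel {n : ℕ} (M : Rel n) : Submodule ℂ (Fin n → ℂ) :=
  M.comap (LinearMap.inr ℂ _ _)

/-- Orthogonal complement in `ℂ^n` with respect to the standard inner product. -/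
noncomputable def orth {n : ℕ} (S : Submodule ℂ (Fin n → ℂ)) : Submodule ℂ (Fin n → ℂ) where
  carrier := {y | ∀ x ∈ S, ip x y = 0}
  add_mem' := by
    intro a b ha hb x hx
    simp only [Set.mem_setOf_eq, ip, dotProduct_add] at *
    rw [ha x hx, hb x hx, add_zero]
  zero_mem' := by intro x hx; simp [ip]
  smul_mem' := by
    intro c a ha x hx
    simp only [Set.mem_setOf_eq, ip, dotProduct_smul] at *
    rw [ha x hx, smul_zero]

def IsSymmetricRel {n : ℕ} (M : Rel n) : Prop := M ≤ adj M
def IsSelfAdjointRel {n : ℕ} (M : Rel n) : Prop := M = adj M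
def IsSkewSymmetricRel {n : ℕ} (M : Rel n) : Prop := M ≤ negRel (adj M)
def IsSkewAdjointRel {n : ℕ} (M : Rel n) : Prop := M = negRel (adj M)

def IsDissipativeRel {n : ℕ} (M : Rel n) : Prop := ∀ p ∈ M, (ip p.1 p.2).re ≤ 0
def IsNonnegRel {n : ℕ} (M : Rel n) : Prop :=
  IsSymmetricRel M ∧ ∀ p ∈ M, 0 ≤ ip p.1 p.2
def IsMaxDissipativeRel {n : ℕ} (M : Rel n) : Prop :=
  IsDissipativeRel M ∧ ∀ M' : Rel n, IsDissipativeRel M' → M ≤ M' → M = M'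
def IsMaxNonnegRel {n : ℕ} (M : Rel n) : Prop :=
  IsNonnegRel M ∧ ∀ M' : Rel n, IsNonnegRel M' → M ≤ M' → M = M'

/-- `det (s E − A)` as a polynomial in `s`. -/
noncomputable def pencilDet {n : ℕ} (E A : Matrix (Fin n) (Fin n) ℂ) : Polynomial ℂ :=
  ((Polynomial.X : Polynomial ℂ) • E.map Polynomial.C - A.map Polynomial.C).det

/-- A square pencil is regular if `det (sE − A)` is not the zero polynomial. -/
def PencilRegular {n : ℕ} (E A : Matrix (Fin n) (Fin n) ℂ) : Prop :=
  pencilDet E A ≠ 0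

/-- The (generic) rank of the pencil `sE − A` over the field of rational functions. -/
noncomputable def pencilRank {n : ℕ} (E A : Matrix (Fin n) (Fin n) ℂ) : ℕ :=
  (((Polynomial.X : Polynomial ℂ) • E.map Polynomial.C - A.map Polynomial.C).map
    (algebraMap (Polynomial ℂ) (RatFunc ℂ))).rank

/-- `μ` is an eigenvalue of `sE − A` if the rank of `μE − A` drops below the generic rank. -/
noncomputable def IsPencilEigenvalue {n : ℕ} (E A : Matrix (Fin n) (Fin n) ℂ) (μ : ℂ) : Prop :=
  (μ • E - A).rank < pencilRank E A

/-- For a regular pencil, the eigenvalue `μ` is semi-simple iff there is no Jordan chain of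
length two, i.e. no `x ≠ 0` with `(μE − A)x = 0` and `Ex ∈ ran (μE − A)`. -/
def SemiSimpleEig {n : ℕ} (E A : Matrix (Fin n) (Fin n) ℂ) (μ : ℂ) : Prop :=
  ¬ ∃ x y : Fin n → ℂ, x ≠ 0 ∧ (μ • E - A).mulVec x = 0 ∧ (μ • E - A).mulVec y = E.mulVec x

/-- For a regular pencil, all Jordan blocks at the eigenvalue `μ` have size at most two iff
there is no Jordan chain of length three. -/
def JordanBlocksAtMostTwo {n : ℕ} (E A : Matrix (Fin n) (Fin n) ℂ) (μ : ℂ) : Prop :=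
  ¬ ∃ x y z : Fin n → ℂ, x ≠ 0 ∧ (μ • E - A).mulVec x = 0 ∧
    (μ • E - A).mulVec y = E.mulVec x ∧ (μ • E - A).mulVec z = E.mulVec y

/-- A fixed matrix norm (Frobenius norm); the resolvent-growth characterizations are
independent of the choice of matrix norm. -/
noncomputable def mnorm {n : ℕ} (M : Matrix (Fin n) (Fin n) ℂ) : ℝ :=
  Real.sqrt (∑ i, ∑ j, ‖M i j‖ ^ 2)

end
end PHDAE

/-! Everything reduces to the sesquilinear form `⟨Fz, Gw⟩ = z* (F*G) w` on `ℂ^l`: the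
relation is symmetric iff this form is Hermitian, i.e. `G*F = F*G`, and
`2 Re ⟨Fz, Gz⟩ = z* (G*F + F*G) z`. -/

namespace Matrix

variable {ι : Type*} [Fintype ι]

lemma ext_of_star_dotProduct_mulVec {A B : Matrix ι ι ℂ}
    (h : ∀ z w, star z ⬝ᵥ A *ᵥ w = star z ⬝ᵥ B *ᵥ w) : A = B := by
  refine ext_iff_mulVec.mpr fun w ↦ sub_eq_zero.mp ?_
  rw [← dotProduct_star_self_eq_zero, dotProduct_sub, h, sub_self]

lemma star_dotProduct_conjTranspose_add_self_mulVec (A : Matrix ι ι ℂ) (z : ι → ℂ) :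
    star z ⬝ᵥ (Aᴴ + A) *ᵥ z = (2 * (star z ⬝ᵥ A *ᵥ z).re : ℝ) := by
  have hconj : star (star z ⬝ᵥ A *ᵥ z) = star z ⬝ᵥ Aᴴ *ᵥ z := by
    rw [star_dotProduct, star_star, star_mulVec, dotProduct_mulVec]
  rw [add_mulVec, dotProduct_add, ← hconj, RCLike.star_def, add_comm, Complex.add_conj]

end Matrix

namespace PHDAE

variable {n l : ℕ}

lemma ip_mulVec_mulVec (F G : Matrix (Fin n) (Fin l) ℂ) (z w : Fin l → ℂ) :
    ip (F *ᵥ z) (G *ᵥ w) = star z ⬝ᵥ (Fᴴ * G) *ᵥ w := by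
  rw [ip, star_mulVec, dotProduct_mulVec, vecMul_vecMul, ← dotProduct_mulVec]

lemma mem_adj {M : Rel n} {p : (Fin n → ℂ) × (Fin n → ℂ)} :
    p ∈ adj M ↔ ∀ q ∈ M, ip p.1 q.2 = ip p.2 q.1 :=
  Iff.rfl

lemma forall_mem_ranRel {F G : Matrix (Fin n) (Fin l) ℂ}
    {P : (Fin n → ℂ) × (Fin n → ℂ) → Prop} :
    (∀ p ∈ ranRel F G, P p) ↔ ∀ z, P (F *ᵥ z, G *ᵥ z) := by
  simp [ranRel]

theorem isSymmetricRel_ranRel_iff (F G : Matrix (Fin n) (Fin l) ℂ) :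
    IsSymmetricRel (ranRel F G) ↔ Gᴴ * F = Fᴴ * G := by
  simp only [IsSymmetricRel, SetLike.le_def, forall_mem_ranRel, mem_adj, ip_mulVec_mulVec]
  exact ⟨fun h ↦ (ext_of_star_dotProduct_mulVec h).symm, fun h z w ↦ by rw [h]⟩

theorem isNonnegRel_ranRel_iff (F G : Matrix (Fin n) (Fin l) ℂ) :
    IsNonnegRel (ranRel F G) ↔ Gᴴ * F = Fᴴ * G ∧ (Gᴴ * F).PosSemidef := by
  rw [IsNonnegRel, isSymmetricRel_ranRel_iff, forall_mem_ranRel]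
  refine and_congr_right fun h ↦ ?_
  have hherm : (Gᴴ * F).IsHermitian := by
    rw [IsHermitian, conjTranspose_mul, conjTranspose_conjTranspose, h]
  rw [posSemidef_iff_dotProduct_mulVec, and_iff_right hherm, h]
  simp only [ip_mulVec_mulVec]

theorem isDissipativeRel_ranRel_iff (F G : Matrix (Fin n) (Fin l) ℂ) :
    IsDissipativeRel (ranRel F G) ↔ (-(Gᴴ * F + Fᴴ * G)).PosSemidef := by
  have hGF : Gᴴ * F = (Fᴴ * G)ᴴ := by rw [conjTranspose_mul, conjTranspose_conjTranspose]
  have hherm : (-(Gᴴ * F + Fᴴ * G)).IsHermitian := by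
    rw [IsHermitian, conjTranspose_neg, conjTranspose_add, hGF, conjTranspose_conjTranspose,
      add_comm]
  rw [posSemidef_iff_dotProduct_mulVec, and_iff_right hherm, IsDissipativeRel, forall_mem_ranRel]
  simp only [ip_mulVec_mulVec, hGF, neg_mulVec, dotProduct_neg,
    star_dotProduct_conjTranspose_add_self_mulVec, ← Complex.ofReal_neg, Complex.zero_le_real]
  refine forall_congr' fun z ↦ ?_
  constructor <;> intro h <;> linarith

end PHDAE

open PHDAE Matrix in
/-- `ran [F; G]` is nonnegative iff `G*F = F*G ≥ 0`,
and dissipative iff `G*F + F*G ≤ 0`. -/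
theorem stmt_5 {n l : ℕ} (F G : Matrix (Fin n) (Fin l) ℂ) :
    (IsNonnegRel (ranRel F G) ↔ Gᴴ * F = Fᴴ * G ∧ (Gᴴ * F).PosSemidef) ∧
    (IsDissipativeRel (ranRel F G) ↔ (-(Gᴴ * F + Fᴴ * G)).PosSemidef) :=
  ⟨isNonnegRel_ranRel_iff F G, isDissipativeRel_ranRel_iff F G⟩
end

section
/- Let E, A ∈ K^{n×n} with ran[E; A] = D∘L, where D ⊆ K^{2n} is a maximally dissipative linear relation and L = (graph Q)^{−1} for some positive definite matrix Q ∈ K^{n×n}. Then the pencil sE − A is regular and has index at most one. -/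
open Matrix
open scoped ComplexOrder

/-! For `v ∈ ℂⁿ` the pair `(Ev, Av)` is `(Qy, z)` for some `(y, z) ∈ D`. A maximally dissipative
relation has dimension at least `n`: otherwise some `a ≠ 0` is orthogonal to every `x - y` with
`(x, y) ∈ D`, and `D + span {(a, -a)}` is still dissipative. As `Q` is invertible, `ran [E; A]` has
the same dimension as `D`, so `v ↦ (Ev, Av)` is injective and `‖v‖ ≤ C (‖Ev‖ + ‖Av‖)`.
For `t ≥ 1` and `w = (tE - A)v`, dissipativity gives `t Re⟨y, Qy⟩ ≤ Re⟨y, w⟩`, so coercivity of `Q`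
bounds `t‖Ev‖` and hence `‖Av‖ ≤ t‖Ev‖ + ‖w‖` by multiples of `‖w‖`. Thus `‖v‖ ≤ K ‖(tE - A)v‖`
uniformly in `t ≥ 1`: each `tE - A` is invertible (so the pencil is regular) and the columns of
its inverse have norm at most `K`. -/

open PHDAE Matrix WithLp
open scoped InnerProductSpace

section InnerProductSpace

variable {𝕜 E : Type*} [RCLike 𝕜] [NormedAddCommGroup E] [InnerProductSpace 𝕜 E]

theorem ContinuousLinearMap.exists_pos_mul_norm_sq_le_re_inner [FiniteDimensional 𝕜 E]
    (T : E →L[𝕜] E) (hT : ∀ x ≠ 0, 0 < RCLike.re ⟪x, T x⟫_𝕜) :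
    ∃ c > 0, ∀ x, c * ‖x‖ ^ 2 ≤ RCLike.re ⟪x, T x⟫_𝕜 := by
  have hf : ∀ x, RCLike.re ⟪x, T x⟫_𝕜 = T.reApplyInnerSelf x := fun x => inner_re_symm _ _
  simp only [hf] at hT ⊢
  rcases subsingleton_or_nontrivial E with hE | hE
  · exact ⟨1, one_pos, fun x => by simp [Subsingleton.elim x 0, T.reApplyInnerSelf_apply]⟩
  have := FiniteDimensional.proper_rclike 𝕜 E
  obtain ⟨x₀, hx₀, hmin⟩ := (isCompact_sphere (0 : E) 1).exists_isMinOn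
    (Set.nonempty_coe_sort.mp (NormedSpace.sphere_nonempty_rclike 𝕜 zero_le_one))
    T.reApplyInnerSelf_continuous.continuousOn
  refine ⟨_, hT x₀ (ne_zero_of_mem_unit_sphere ⟨x₀, hx₀⟩), fun x => ?_⟩
  rcases eq_or_ne x 0 with rfl | hx
  · simp [ContinuousLinearMap.reApplyInnerSelf_apply]
  have hu : ((‖x‖⁻¹ : ℝ) : 𝕜) • x ∈ Metric.sphere (0 : E) 1 := by
    simp [norm_smul, hx]
  have hxu := hmin hu
  rw [Set.mem_ofPred_eq, T.reApplyInnerSelf_smul, RCLike.norm_ofReal, abs_inv, abs_norm,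
    inv_pow] at hxu
  rw [mul_comm]
  exact (le_inv_mul_iff₀ (by positivity)).mp hxu

theorem re_inner_add_sub_eq {x y b : E} (h : ⟪x - y, b⟫_𝕜 = 0) :
    RCLike.re ⟪x + b, y - b⟫_𝕜 = RCLike.re ⟪x, y⟫_𝕜 - ‖b‖ ^ 2 := by
  rw [inner_sub_left, sub_eq_zero] at h
  rw [inner_add_left, inner_sub_right, inner_sub_right, h, map_add, map_sub, map_sub,
    inner_re_symm b y, inner_self_eq_norm_sq]
  ring

theorem mul_norm_apply_le_of_re_inner_nonpos {T : E →L[𝕜] E} {c : ℝ} (hc : 0 < c)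
    (hT : ∀ y, c * ‖y‖ ^ 2 ≤ RCLike.re ⟪y, T y⟫_𝕜) {y z : E} (hyz : RCLike.re ⟪y, z⟫_𝕜 ≤ 0)
    {t : ℝ} (ht : 0 ≤ t) : t * ‖T y‖ ≤ ‖T‖ / c * ‖(t : 𝕜) • T y - z‖ := by
  set w := (t : 𝕜) • T y - z
  have hw : t * (c * ‖y‖ ^ 2) ≤ ‖y‖ * ‖w‖ :=
    calc t * (c * ‖y‖ ^ 2) ≤ t * RCLike.re ⟪y, T y⟫_𝕜 := mul_le_mul_of_nonneg_left (hT y) ht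
      _ ≤ RCLike.re ⟪y, w⟫_𝕜 := by
          rw [inner_sub_right, inner_smul_right, map_sub, RCLike.re_ofReal_mul]; linarith
      _ ≤ ‖y‖ * ‖w‖ := re_inner_le_norm y w
  have hy : t * c * ‖y‖ ≤ ‖w‖ := by
    rcases (norm_nonneg y).eq_or_lt with hy0 | hy0
    · rw [← hy0, mul_zero]; exact norm_nonneg w
    · nlinarith
  rw [div_mul_eq_mul_div, le_div_iff₀ hc]
  calc t * ‖T y‖ * c ≤ t * (‖T‖ * ‖y‖) * c := by gcongr; exact T.le_opNorm y
    _ = ‖T‖ * (t * c * ‖y‖) := by ring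
    _ ≤ ‖T‖ * ‖w‖ := by gcongr

end InnerProductSpace

section Matrix

variable {ι 𝕜 : Type*} [Fintype ι] [DecidableEq ι] [RCLike 𝕜]

theorem Matrix.PosDef.exists_pos_mul_norm_sq_le {Q : Matrix ι ι 𝕜} (hQ : Q.PosDef) :
    ∃ c > 0, ∀ x : EuclideanSpace 𝕜 ι,
      c * ‖x‖ ^ 2 ≤ RCLike.re ⟪x, toEuclideanCLM (n := ι) (𝕜 := 𝕜) Q x⟫_𝕜 :=
  (toEuclideanCLM (n := ι) (𝕜 := 𝕜) Q).exists_pos_mul_norm_sq_le_re_inner fun x hx => by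
    simpa [EuclideanSpace.inner_eq_star_dotProduct, dotProduct_comm] using
      hQ.re_dotProduct_pos (x := ofLp x) (by simpa using hx)

theorem Matrix.exists_norm_le_mul_add_of_ker_eq_bot {E A : Matrix ι ι 𝕜}
    (h : LinearMap.ker ((mulVecLin E).prod (mulVecLin A)) = ⊥) :
    ∃ C ≥ 0, ∀ v : ι → 𝕜, ‖toLp 2 v‖ ≤ C * (‖toLp 2 (E *ᵥ v)‖ + ‖toLp 2 (A *ᵥ v)‖) := by
  set J : EuclideanSpace 𝕜 ι →ₗ[𝕜] EuclideanSpace 𝕜 ι × EuclideanSpace 𝕜 ι :=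
    (toEuclideanLin E).prod (toEuclideanLin A)
  have hJ : LinearMap.ker J = ⊥ := by
    rw [LinearMap.ker_eq_bot'] at h ⊢
    intro x hx
    have hx' : E *ᵥ ofLp x = 0 ∧ A *ᵥ ofLp x = 0 := by
      simpa [J, Prod.ext_iff, toLpLin_apply] using hx
    simpa using congrArg (toLp 2) (h (ofLp x) (Prod.ext hx'.1 hx'.2))
  obtain ⟨K, -, hK⟩ := J.exists_antilipschitzWith hJ
  refine ⟨K, K.2, fun v => ?_⟩
  calc ‖toLp 2 v‖ ≤ K * ‖J (toLp 2 v)‖ := ZeroHomClass.bound_of_antilipschitz J hK _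
    _ ≤ K * (‖toLp 2 (E *ᵥ v)‖ + ‖toLp 2 (A *ᵥ v)‖) := by
        gcongr
        exact max_le_add_of_nonneg (norm_nonneg _) (norm_nonneg _)

end Matrix

namespace PHDAE

variable {n : ℕ}

theorem ip_eq_inner (x y : Fin n → ℂ) : ip x y = ⟪toLp 2 x, toLp 2 y⟫_ℂ :=
  dotProduct_comm _ _

theorem mem_invRel {M : Rel n} {p : (Fin n → ℂ) × (Fin n → ℂ)} :
    p ∈ invRel M ↔ p.swap ∈ M :=
  Submodule.mem_map_equiv _

theorem mem_graphRel {Q : Matrix (Fin n) (Fin n) ℂ} {p : (Fin n → ℂ) × (Fin n → ℂ)} :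
    p ∈ graphRel Q ↔ p.2 = Q *ᵥ p.1 := by
  constructor
  · rintro ⟨x, rfl⟩
    simp
  · intro hp
    exact ⟨p.1, Prod.ext (by simp) (by simp [hp])⟩

theorem mem_comp_invRel_graphRel {D : Rel n} {Q : Matrix (Fin n) (Fin n) ℂ}
    {p : (Fin n → ℂ) × (Fin n → ℂ)} :
    p ∈ PHDAE.comp D (invRel (graphRel Q)) ↔ ∃ y, p.1 = Q *ᵥ y ∧ (y, p.2) ∈ D :=
  exists_congr fun _ => and_congr_left' (mem_invRel.trans mem_graphRel)

theorem comp_invRel_graphRel (D : Rel n) (Q : Matrix (Fin n) (Fin n) ℂ) :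
    PHDAE.comp D (invRel (graphRel Q)) = D.map ((mulVecLin Q).prodMap LinearMap.id) := by
  ext ⟨x, z⟩
  rw [mem_comp_invRel_graphRel, Submodule.mem_map]
  constructor
  · rintro ⟨y, rfl, hyz⟩
    exact ⟨(y, z), hyz, rfl⟩
  · rintro ⟨⟨y, z'⟩, hyz, hp⟩
    simp only [LinearMap.prodMap_apply, mulVecLin_apply, LinearMap.id_apply, Prod.mk.injEq] at hp
    obtain ⟨rfl, rfl⟩ := hp
    exact ⟨y, rfl, hyz⟩

theorem finrank_comp_invRel_graphRel (D : Rel n) {Q : Matrix (Fin n) (Fin n) ℂ} (hQ : IsUnit Q) :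
    Module.finrank ℂ (PHDAE.comp D (invRel (graphRel Q))) = Module.finrank ℂ D := by
  have hinj : Function.Injective ((mulVecLin Q).prodMap (LinearMap.id (R := ℂ)
      (M := Fin n → ℂ))) :=
    (mulVec_injective_iff_isUnit.mpr hQ).prodMap Function.injective_id
  rw [comp_invRel_graphRel]
  exact (Submodule.equivMapOfInjective _ hinj D).finrank_eq.symm

theorem IsDissipativeRel.sup_span_singleton {D : Rel n} (hD : IsDissipativeRel D)
    {a : Fin n → ℂ} (ha : ∀ p ∈ D, ip (p.1 - p.2) a = 0) :
    IsDissipativeRel (D ⊔ Submodule.span ℂ {(a, -a)}) := by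
  intro q hq
  obtain ⟨p, hp, s, hs, rfl⟩ := Submodule.mem_sup.mp hq
  obtain ⟨c, rfl⟩ := Submodule.mem_span_singleton.mp hs
  set b := c • a
  have hq : p + c • (a, -a) = (p.1 + b, p.2 - b) :=
    Prod.ext rfl (by simp [b, sub_eq_add_neg])
  have horth : ⟪toLp 2 p.1 - toLp 2 p.2, toLp 2 b⟫_ℂ = 0 := by
    rw [← WithLp.toLp_sub, ← ip_eq_inner, ip, dotProduct_smul, ← ip, ha p hp, smul_zero]
  rw [hq, ip_eq_inner, WithLp.toLp_add, WithLp.toLp_sub]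
  change RCLike.re (K := ℂ) _ ≤ 0
  rw [re_inner_add_sub_eq horth, ← ip_eq_inner]
  exact sub_nonpos.mpr ((hD p hp).trans (sq_nonneg _))

theorem IsMaxDissipativeRel.le_finrank {D : Rel n} (hD : IsMaxDissipativeRel D) :
    n ≤ Module.finrank ℂ D := by
  by_contra! hlt
  set Φ : (Fin n → ℂ) × (Fin n → ℂ) →ₗ[ℂ] EuclideanSpace ℂ (Fin n) :=
    (WithLp.linearEquiv 2 ℂ (Fin n → ℂ)).symm.toLinearMap ∘ₗ
      (LinearMap.fst ℂ _ _ - LinearMap.snd ℂ _ _)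
  have hS : D.map Φ ≠ ⊤ := by
    intro htop
    have := (Submodule.finrank_map_le Φ D).trans_lt hlt
    rw [htop, finrank_top, finrank_euclideanSpace_fin] at this
    exact this.false
  obtain ⟨u, hu, hu0⟩ := (Submodule.ne_bot_iff _).mp
    (mt Submodule.orthogonal_eq_bot_iff.mp hS)
  have ha : ∀ p ∈ D, ip (p.1 - p.2) (ofLp u) = 0 := fun p hp => by
    rw [ip_eq_inner, toLp_ofLp]
    exact Submodule.inner_right_of_mem_orthogonal (Submodule.mem_map_of_mem hp) hu
  have hmem : (ofLp u, -ofLp u) ∈ D := by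
    rw [hD.2 _ (hD.1.sup_span_singleton ha) le_sup_left]
    exact Submodule.mem_sup_right (Submodule.mem_span_singleton_self _)
  have h2u := ha _ hmem
  rw [sub_neg_eq_add, ip_eq_inner, toLp_add, toLp_ofLp, inner_add_left, ← two_mul, mul_eq_zero,
    inner_self_eq_zero] at h2u
  exact hu0 (h2u.resolve_left two_ne_zero)

theorem ker_prod_mulVecLin_eq_bot_of_le_finrank {l : ℕ} {F G : Matrix (Fin n) (Fin l) ℂ}
    (h : l ≤ Module.finrank ℂ (ranRel F G)) :
    LinearMap.ker ((mulVecLin F).prod (mulVecLin G)) = ⊥ := by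
  have := LinearMap.finrank_range_add_finrank_ker ((mulVecLin F).prod (mulVecLin G))
  rw [Module.finrank_fin_fun] at this
  exact Submodule.finrank_eq_zero.mp (by unfold ranRel at h; omega)

theorem exists_norm_le_mul_add_of_ranRel_eq {E A Q : Matrix (Fin n) (Fin n) ℂ}
    (hQ : Q.PosDef) {D : Rel n} (hD : IsMaxDissipativeRel D)
    (h : ranRel E A = PHDAE.comp D (invRel (graphRel Q))) :
    ∃ C ≥ 0, ∀ v : Fin n → ℂ, ‖toLp 2 v‖ ≤ C * (‖toLp 2 (E *ᵥ v)‖ + ‖toLp 2 (A *ᵥ v)‖) := by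
  have hrank : n ≤ Module.finrank ℂ (ranRel E A) := by
    rw [h, finrank_comp_invRel_graphRel D hQ.isUnit]
    exact hD.le_finrank
  exact exists_norm_le_mul_add_of_ker_eq_bot (ker_prod_mulVecLin_eq_bot_of_le_finrank hrank)

theorem norm_add_norm_le_of_re_ip_nonpos {E A Q : Matrix (Fin n) (Fin n) ℂ} {c : ℝ} (hc : 0 < c)
    (hcoer : ∀ x, c * ‖x‖ ^ 2 ≤ RCLike.re ⟪x, toEuclideanCLM (n := Fin n) (𝕜 := ℂ) Q x⟫_ℂ)
    {v y : Fin n → ℂ} (hEv : E *ᵥ v = Q *ᵥ y) (hdiss : (ip y (A *ᵥ v)).re ≤ 0)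
    {t : ℝ} (ht : 1 ≤ t) :
    ‖toLp 2 (E *ᵥ v)‖ + ‖toLp 2 (A *ᵥ v)‖ ≤
      (2 * (‖toEuclideanCLM (n := Fin n) (𝕜 := ℂ) Q‖ / c) + 1) *
        ‖toLp 2 (((t : ℂ) • E - A) *ᵥ v)‖ := by
  set T := toEuclideanCLM (n := Fin n) (𝕜 := ℂ) Q
  set w : EuclideanSpace ℂ (Fin n) := toLp 2 (((t : ℂ) • E - A) *ᵥ v)
  have hTy : T (toLp 2 y) = toLp 2 (E *ᵥ v) := by simp [T, hEv]
  have hw : w = (t : ℂ) • toLp 2 (E *ᵥ v) - toLp 2 (A *ᵥ v) := by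
    simp [w, sub_mulVec, smul_mulVec]
  have hEw : t * ‖toLp 2 (E *ᵥ v)‖ ≤ ‖T‖ / c * ‖w‖ := by
    have := mul_norm_apply_le_of_re_inner_nonpos hc hcoer (y := toLp 2 y) (z := toLp 2 (A *ᵥ v))
      (by rwa [← ip_eq_inner]) (by linarith)
    rw [hTy] at this
    -- `rfl` identifies the `RCLike` and `Complex` coercions `ℝ → ℂ`.
    exact this.trans_eq (by rw [hw]; rfl)
  have hAw : ‖toLp 2 (A *ᵥ v)‖ ≤ t * ‖toLp 2 (E *ᵥ v)‖ + ‖w‖ := by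
    rw [show toLp 2 (A *ᵥ v) = (t : ℂ) • toLp 2 (E *ᵥ v) - w by rw [hw, sub_sub_cancel]]
    refine (norm_sub_le _ _).trans_eq ?_
    rw [norm_smul, Complex.norm_real, Real.norm_of_nonneg (by linarith)]
  nlinarith [norm_nonneg (toLp 2 (E *ᵥ v))]

theorem exists_norm_le_mul_norm_smul_sub_mulVec {E A Q : Matrix (Fin n) (Fin n) ℂ}
    (hQ : Q.PosDef) {D : Rel n} (hD : IsMaxDissipativeRel D)
    (h : ranRel E A = PHDAE.comp D (invRel (graphRel Q))) :
    ∃ K ≥ 0, ∀ t : ℝ, 1 ≤ t → ∀ v : Fin n → ℂ,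
      ‖toLp 2 v‖ ≤ K * ‖toLp 2 (((t : ℂ) • E - A) *ᵥ v)‖ := by
  obtain ⟨C, hC, hEA⟩ := exists_norm_le_mul_add_of_ranRel_eq hQ hD h
  obtain ⟨c, hc, hcoer⟩ := hQ.exists_pos_mul_norm_sq_le
  refine ⟨C * (2 * (‖toEuclideanCLM (n := Fin n) (𝕜 := ℂ) Q‖ / c) + 1), by positivity,
    fun t ht v => ?_⟩
  have hv : (E *ᵥ v, A *ᵥ v) ∈ ranRel E A := ⟨v, rfl⟩
  rw [h, mem_comp_invRel_graphRel] at hv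
  obtain ⟨y, hEv, hyz⟩ := hv
  rw [mul_assoc]
  exact (hEA v).trans <| by
    gcongr
    exact norm_add_norm_le_of_re_ip_nonpos hc hcoer hEv (hD.1 _ hyz) ht

theorem det_ne_zero_of_norm_le_mul_norm_mulVec {B : Matrix (Fin n) (Fin n) ℂ} {K : ℝ}
    (h : ∀ v : Fin n → ℂ, ‖toLp 2 v‖ ≤ K * ‖toLp 2 (B *ᵥ v)‖) : B.det ≠ 0 := by
  intro hdet
  obtain ⟨v, hv0, hv⟩ := exists_mulVec_eq_zero_iff.mpr hdet
  have := h v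
  rw [hv, toLp_zero, norm_zero, mul_zero, norm_le_zero_iff] at this
  exact hv0 (by simpa using congrArg ofLp this)

theorem mnorm_le_of_norm_mulVec_le {M : Matrix (Fin n) (Fin n) ℂ} {K : ℝ} (hK : 0 ≤ K)
    (h : ∀ v : Fin n → ℂ, ‖toLp 2 (M *ᵥ v)‖ ≤ K * ‖toLp 2 v‖) : mnorm M ≤ √n * K := by
  have hcol : ∀ j, ∑ i, ‖M i j‖ ^ 2 ≤ K ^ 2 := fun j => by
    have hj := h (Pi.single j 1)
    rw [PiLp.toLp_single, PiLp.norm_single, norm_one, mul_one] at hj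
    calc ∑ i, ‖M i j‖ ^ 2 = ‖toLp 2 (M *ᵥ Pi.single j 1)‖ ^ 2 := by
          rw [EuclideanSpace.norm_sq_eq]
          simp
      _ ≤ K ^ 2 := pow_le_pow_left₀ (norm_nonneg _) hj 2
  rw [mnorm, ← Real.sqrt_sq hK, ← Real.sqrt_mul (Nat.cast_nonneg n)]
  refine Real.sqrt_le_sqrt ?_
  rw [Finset.sum_comm]
  calc ∑ j, ∑ i, ‖M i j‖ ^ 2 ≤ ∑ _j : Fin n, K ^ 2 := Finset.sum_le_sum fun j _ => hcol j
    _ = n * K ^ 2 := by simp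

theorem mnorm_inv_le {B : Matrix (Fin n) (Fin n) ℂ} {K : ℝ} (hK : 0 ≤ K)
    (h : ∀ v : Fin n → ℂ, ‖toLp 2 v‖ ≤ K * ‖toLp 2 (B *ᵥ v)‖) : mnorm B⁻¹ ≤ √n * K := by
  have hB : IsUnit B.det := isUnit_iff_ne_zero.mpr (det_ne_zero_of_norm_le_mul_norm_mulVec h)
  refine mnorm_le_of_norm_mulVec_le hK fun v => ?_
  simpa [mulVec_mulVec, mul_nonsing_inv B hB] using h (B⁻¹ *ᵥ v)

theorem pencilDet_eval (E A : Matrix (Fin n) (Fin n) ℂ) (μ : ℂ) :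
    (pencilDet E A).eval μ = (μ • E - A).det := by
  rw [pencilDet, ← Polynomial.coe_evalRingHom, RingHom.map_det, RingHom.mapMatrix_apply]
  congr 1
  ext i j
  simp only [Polynomial.coe_evalRingHom, map_apply, Matrix.sub_apply, Matrix.smul_apply,
    smul_eq_mul, Polynomial.X_mul_C, Polynomial.eval_sub, Polynomial.eval_mul, Polynomial.eval_C,
    Polynomial.eval_X, sub_left_inj]
  exact mul_comm _ _

theorem pencilRegular_of_det_ne_zero {E A : Matrix (Fin n) (Fin n) ℂ} (μ : ℂ)
    (h : (μ • E - A).det ≠ 0) : PencilRegular E A := by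
  intro h0
  apply h
  rw [← pencilDet_eval, h0, Polynomial.eval_zero]

end PHDAE

open PHDAE Matrix in
/-- if `ran [E; A] = D ∘ L` with `D` maximally dissipative and
`L = (graph Q)⁻¹` for a positive definite `Q`, then `sE − A` is regular and has index
at most one (bounded resolvent on a real half-axis). -/
theorem stmt_18 {n : ℕ} (E A Q : Matrix (Fin n) (Fin n) ℂ) (hQ : Q.PosDef)
    (D : Rel n) (hD : IsMaxDissipativeRel D)
    (h : ranRel E A = PHDAE.comp D (invRel (graphRel Q))) :
    PencilRegular E A ∧ ∃ M > (0 : ℝ), ∃ ω : ℝ, ∀ lam : ℝ, ω < lam →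
      mnorm (((lam : ℂ) • E - A)⁻¹) ≤ M := by
  obtain ⟨K, hK, hres⟩ := exists_norm_le_mul_norm_smul_sub_mulVec hQ hD h
  refine ⟨pencilRegular_of_det_ne_zero 1 ?_, √n * K + 1, by positivity, 1, fun t ht => ?_⟩
  · simpa using det_ne_zero_of_norm_le_mul_norm_mulVec (hres 1 le_rfl)
  · exact (mnorm_inv_le hK (hres t ht.le)).trans (le_add_of_nonneg_right zero_le_one)
end
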